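/- The function f(t) = t·log(1+|t|) does not satisfy the Ambrosetti–Rabinowitz condition: there do not exist μ > 2 and R > 0 such that 0 < μ F(t) ≤ t f(t) for all |t| ≥ R, where F(t) = ∫₀ᵗ f(τ)dτ. -/

import Mathlib

open MeasureTheory Real Filter Topology

lemma aux_deriv (τ : ℝ) (hτ : 0 ≤ τ) :
    HasDerivAt (fun x : ℝ => (x^2/2) * Real.log (1 + x) - x^2/4 + x/2
      - (1/2) * Real.log (1 + x)) (τ * Real.log (1 + τ)) τ := by
  have h1 : (0:ℝ) < 1 + τ := by linarith
  have hlog : HasDerivAt (fun x : ℝ => Real.log (1 + x)) (1/(1+τ)) τ := by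
    have := (Real.hasDerivAt_log h1.ne').comp τ ((hasDerivAt_id τ).const_add 1)
    simpa [Function.comp_def] using this
  have hsq : HasDerivAt (fun x : ℝ => x^2/2) τ τ := by
    have := (hasDerivAt_pow 2 τ).div_const 2
    simpa using this
  have h2 : HasDerivAt (fun x : ℝ => (x^2/2) * Real.log (1 + x))
      (τ * Real.log (1+τ) + (τ^2/2) * (1/(1+τ))) τ := hsq.mul hlog
  have h3 : HasDerivAt (fun x : ℝ => x^2/4) (τ/2) τ := by
    have := (hasDerivAt_pow 2 τ).div_const 4
    refine this.congr_deriv ?_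
    push_cast
    norm_num
    ring
  have h4 : HasDerivAt (fun x : ℝ => x/2) (1/2) τ := (hasDerivAt_id τ).div_const 2
  have h5 := ((h2.sub h3).add h4).sub (hlog.const_mul (1/2:ℝ))
  refine h5.congr_deriv ?_
  have h1' : (1:ℝ) + τ ≠ 0 := h1.ne'
  field_simp
  ring

lemma aux_integral (t : ℝ) (ht : 0 ≤ t) :
    (∫ τ in (0:ℝ)..t, τ * Real.log (1 + |τ|))
      = (t^2/2) * Real.log (1 + t) - t^2/4 + t/2 - (1/2) * Real.log (1 + t) := by
  have hcongr : (∫ τ in (0:ℝ)..t, τ * Real.log (1 + |τ|))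
      = ∫ τ in (0:ℝ)..t, τ * Real.log (1 + τ) := by
    apply intervalIntegral.integral_congr
    intro x hx
    rw [Set.uIcc_of_le ht] at hx
    simp [abs_of_nonneg hx.1]
  rw [hcongr]
  have hint : IntervalIntegrable (fun τ : ℝ => τ * Real.log (1 + τ)) volume 0 t := by
    apply ContinuousOn.intervalIntegrable
    apply ContinuousOn.mul continuousOn_id
    apply ContinuousOn.log (by fun_prop)
    intro x hx
    rw [Set.uIcc_of_le ht] at hx
    have := hx.1
    positivity
  have := intervalIntegral.integral_eq_sub_of_hasDerivAt
    (f := fun x : ℝ => (x^2/2) * Real.log (1 + x) - x^2/4 + x/2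
      - (1/2) * Real.log (1 + x))
    (fun τ hτ => by
      rw [Set.uIcc_of_le ht] at hτ
      exact aux_deriv τ hτ.1) hint
  rw [this]
  simp [Real.log_one]

/-- The function `f(t) = t·log(1+|t|)` does not satisfy the Ambrosetti–Rabinowitz
condition: there are no `μ > 2` and `R > 0` such that `0 < μF(t) ≤ t·f(t)` for all
`|t| ≥ R`, where `F(t) = ∫₀ᵗ f(τ)dτ`. -/
theorem stmt1 :
    ¬ ∃ (μ R : ℝ), 2 < μ ∧ 0 < R ∧
      ∀ t : ℝ, R ≤ |t| →
        0 < μ * (∫ τ in (0:ℝ)..t, τ * Real.log (1 + |τ|)) ∧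
        μ * (∫ τ in (0:ℝ)..t, τ * Real.log (1 + |τ|)) ≤ t * (t * Real.log (1 + |t|)) := by
  rintro ⟨μ, R, hμ, hR, h⟩
  set c : ℝ := μ / (2 * (μ - 2)) with hc
  set t : ℝ := max R (Real.exp c) with htdef
  have ht0 : 0 < t := lt_of_lt_of_le hR (le_max_left _ _)
  have htR : R ≤ |t| := by rw [abs_of_pos ht0]; exact le_max_left _ _
  obtain ⟨-, h2⟩ := h t htR
  rw [aux_integral t ht0.le, abs_of_pos ht0] at h2
  have hlogle : Real.log (1 + t) ≤ t := by
    have := Real.log_le_sub_one_of_pos (show (0:ℝ) < 1 + t by linarith)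
    linarith
  -- derive (μ-2) * log(1+t) ≤ μ/2
  have hlogpos : 0 < Real.log (1 + t) := by
    apply Real.log_pos; linarith
  have key : (μ - 2) * Real.log (1 + t) ≤ μ / 2 := by
    have hμ2 : 0 < μ - 2 := by linarith
    have hμ0 : 0 < μ := by linarith
    -- from h2: μ*((t²/2)L - t²/4 + t/2 - L/2) ≤ t² L
    -- so (μ-2)(t²/2) L ≤ μ(t²/4 - t/2 + L/2) ≤ μ t²/4
    have h3 : (μ - 2) * (t^2/2) * Real.log (1 + t) ≤ μ * (t^2/4) := by
      nlinarith [h2, hlogle, sq_nonneg t, ht0]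
    have ht2 : 0 < t^2 := by positivity
    nlinarith
  have hclt : c < Real.log (1 + t) := by
    have : Real.exp c ≤ t := le_max_right _ _
    calc c = Real.log (Real.exp c) := (Real.log_exp c).symm
      _ < Real.log (1 + t) := by
          apply Real.log_lt_log (Real.exp_pos c)
          linarith
  have hμ2 : 0 < μ - 2 := by linarith
  have : c = μ / (2 * (μ - 2)) := hc
  have hckey : (μ - 2) * c = μ / 2 := by
    rw [hc]; field_simp
  nlinarith [mul_lt_mul_of_pos_left hclt hμ2]
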